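/- arXiv:0811.3917 — 2 statements merged into one kernel-verified Lean document; each statement's English description precedes it below -/
import Mathlib

section
/- Let (X, μ, T) be a dynamical system with X 0-dimensional. Let A ⊂ X be a clopen subset and let μ(A) = Σ_{i=1}^∞ a_i with a_i > 0 for all i. Then there exists an inessential reduction X' ⊂ X and a partition A ∩ X' = ⨆_{i=1}^∞ A_i of A ∩ X' into pairwise disjoint subsets A_i which are relatively clopen in X' and satisfy μ(A_i) = a_i for all i. -/
open MeasureTheory Topology

/-- `X` is 0-dimensional: it has a countable base of clopen sets. -/
def ZeroDimensional (X : Type*) [TopologicalSpace X] : Prop :=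
  ∃ b : Set (Set X), b.Countable ∧ (∀ s ∈ b, IsClopen s) ∧
    TopologicalSpace.IsTopologicalBasis b

/-- A dynamical system: a non-atomic Borel probability measure of full support on a
topological space together with an ergodic non-singular homeomorphism whose
Radon–Nikodym derivative `d(μ∘T)/dμ` has the continuous version `ω`. -/
structure DynSys (X : Type*) [TopologicalSpace X] [MeasurableSpace X] where
  μ : Measure X
  T : X ≃ₜ X
  ω : X → ℝ
  prob : IsProbabilityMeasure μ
  noAtoms : NoAtoms μ
  fullSupport : ∀ U : Set X, IsOpen U → U.Nonempty → 0 < μ U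
  ergodic : ∀ A : Set X, MeasurableSet A → (⇑T) ⁻¹' A = A → μ A = 0 ∨ μ A = 1
  ωCont : Continuous ω
  ωPos : ∀ x, 0 < ω x
  rnDeriv : Measure.map (⇑T.symm) μ = μ.withDensity (fun x => ENNReal.ofReal (ω x))

namespace DynSys

variable {X Y : Type*} [TopologicalSpace X] [MeasurableSpace X]
  [TopologicalSpace Y] [MeasurableSpace Y]

/-- The iterate `Tⁿ` for `n : ℤ`. -/
noncomputable def iter (D : DynSys X) (n : ℤ) (x : X) : X :=
  (D.T.toEquiv ^ n) x

/-- The Radon–Nikodym cocycle `ρ_μ(x, Tⁿx)`. -/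
noncomputable def rho (D : DynSys X) (x : X) (n : ℤ) : ℝ :=
  if 0 ≤ n then ∑ i ∈ Finset.range n.toNat, Real.log (D.ω (D.iter (i : ℤ) x))
  else - ∑ i ∈ Finset.range (-n).toNat, Real.log (D.ω (D.iter (i : ℤ) (D.iter n x)))

/-- An inessential reduction: a `T`-invariant dense `G_δ` subset of full measure. -/
def InessRed (D : DynSys X) (X' : Set X) : Prop :=
  (⇑D.T) ⁻¹' X' = X' ∧ Dense X' ∧ IsGδ X' ∧ D.μ X' = 1

/-- A set is virtually clopen if its intersection with some inessential reduction `X'`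
is relatively clopen in `X'`. -/
def VirtClopen (D : DynSys X) (A : Set X) : Prop :=
  ∃ X' : Set X, D.InessRed X' ∧ IsClopen (Subtype.val ⁻¹' A : Set X')

/-- The asymptotic range `r(ρ_μ)` of the Radon–Nikodym cocycle. -/
def asymRange (D : DynSys X) : Set ℝ :=
  {t | ∀ ε : ℝ, 0 < ε → ∀ A : Set X, MeasurableSet A → 0 < D.μ A →
    ∃ k : ℤ, k ≠ 0 ∧ ∃ B : Set X, MeasurableSet B ∧ B ⊆ A ∧ 0 < D.μ B ∧
      ∀ x ∈ B, |D.rho x k - t| < ε}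

/-- The topological asymptotic range `r_top(ρ_μ)` of the Radon–Nikodym cocycle. -/
def topAsymRange (D : DynSys X) : Set ℝ :=
  {t | ∀ ε : ℝ, 0 < ε → ∀ A : Set X, D.VirtClopen A → 0 < D.μ A →
    ∃ k : ℤ, k ≠ 0 ∧ ∃ B : Set X, B ⊆ A ∧ 0 < D.μ B ∧
      ∀ x ∈ B, |D.rho x k - t| < ε}

/-- Type `III`: there is no equivalent σ-finite `T`-invariant measure. -/
def TypeIII (D : DynSys X) : Prop :=
  ¬ ∃ ν : Measure X, SigmaFinite ν ∧ ν ≪ D.μ ∧ D.μ ≪ ν ∧ Measure.map (⇑D.T) ν = ν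

/-- Almost continuous orbit equivalence of two dynamical systems. -/
def ACOE (D : DynSys X) (E : DynSys Y) : Prop :=
  ∃ (X₀ : Set X) (Y₀ : Set Y) (φ : X → Y) (ψ : Y → X),
    D.InessRed X₀ ∧ E.InessRed Y₀ ∧
    Set.BijOn φ X₀ Y₀ ∧ ContinuousOn φ X₀ ∧ ContinuousOn ψ Y₀ ∧ Set.InvOn ψ φ X₀ Y₀ ∧
    (∀ x ∈ X₀, φ '' {z | ∃ k : ℤ, z = D.iter k x} = {w | ∃ k : ℤ, w = E.iter k (φ x)}) ∧
    (∃ f : Y → ℝ, ContinuousOn f Y₀ ∧ (∀ y ∈ Y₀, 0 < f y) ∧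
      ∀ A : Set Y, MeasurableSet A →
        D.μ (φ ⁻¹' A ∩ X₀) = ∫⁻ y in A, ENNReal.ofReal (f y) ∂E.μ) ∧
    (∃ n m : X → ℤ, ContinuousOn n X₀ ∧ ContinuousOn m X₀ ∧
      ∀ x ∈ X₀, φ (D.T x) = E.iter (n x) (φ x) ∧ E.T (φ x) = φ (D.iter (m x) x))

end DynSys

/-- An `r`-uniform subrelation of `R_T` on the clopen set `C`, with fundamental
(clopen) subset `B` and splitting homeomorphism `(i, b) ↦ h i b : I_r × B → C`,
each `h i` being given on `B` by `h i b = T^(a i b) b` with `a i` continuous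
(i.e. `h i` belongs to the topological full groupoid `[[T]]_top`);
`proj` and `idx` form the continuous inverse, `proj` being the associated projection. -/
structure UniformRel {X : Type*} [TopologicalSpace X] [MeasurableSpace X]
    (D : DynSys X) (r : ℕ) (C B : Set X) where
  rpos : 0 < r
  h : Fin r → X → X
  a : Fin r → X → ℤ
  clopenB : IsClopen B
  subB : B ⊆ C
  h_zero : ∀ b ∈ B, h ⟨0, rpos⟩ b = b
  h_eq : ∀ (i : Fin r), ∀ b ∈ B, h i b = D.iter (a i b) b
  a_cont : ∀ i : Fin r, ContinuousOn (a i) B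
  h_cont : ∀ i : Fin r, ContinuousOn (h i) B
  maps : ∀ i : Fin r, Set.MapsTo (h i) B C
  inj : ∀ (i j : Fin r), ∀ b ∈ B, ∀ b' ∈ B, h i b = h j b' → i = j ∧ b = b'
  proj : X → X
  idx : X → Fin r
  proj_cont : ContinuousOn proj C
  idx_cont : ContinuousOn idx C
  proj_mem : ∀ x ∈ C, proj x ∈ B
  h_proj : ∀ x ∈ C, h (idx x) (proj x) = x

/-!
Clopen pieces are carved out of what is left of `A` one at a time: at step `n = ⟨i, k⟩` (Cantor
pairing) a clopen piece of the remainder goes into the `i`-th bin, chosen so that the part of `aᵢ`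
still missing drops below `1 / k`. Such pieces exist because `X` has a countable clopen basis and
`μ` is non-atomic, so clopen subsets of an open set take measures filling it up with arbitrarily
small gaps. The bins `Vᵢ` are disjoint open sets with `μ Vᵢ = aᵢ`, so `L = A \ ⋃ Vᵢ` is a closed
null set. Removing the `T`-orbit of `L` leaves an inessential reduction (Baire category and
non-singularity of `T`), and there each `Vᵢ` is relatively clopen, its complement in `A` being the
union of the other bins.
-/

open Set Filter Function
open scoped ENNReal

theorem exists_seq_of_forall_exists {α : Type*} {P : α → Prop} {R : ℕ → α → α → Prop} {a : α}
    (ha : P a) (h : ∀ n x, P x → ∃ y, P y ∧ R n x y) :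
    ∃ s : ℕ → α, s 0 = a ∧ ∀ n, P (s n) ∧ R n (s n) (s (n + 1)) := by
  choose! f hfP hfR using h
  let s : ℕ → α := fun n => Nat.rec a f n
  have hs : ∀ n, P (s n) := fun n => by
    induction n with
    | zero => exact ha
    | succ n ih => exact hfP n _ ih
  exact ⟨s, rfl, fun n => ⟨hs n, hfR n _ (hs n)⟩⟩

theorem Antitone.pairwise_disjoint_on_sdiff_succ {α : Type*} {K : ℕ → Set α} (hK : Antitone K) :
    Pairwise (Disjoint on (fun n => K n \ K (n + 1))) := by
  have key : ∀ {m n}, m < n → Disjoint (K m \ K (m + 1)) (K n \ K (n + 1)) := fun hmn =>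
    disjoint_left.2 fun _ hm hn => hm.2 (hK hmn hn.1)
  intro m n hmn
  rcases hmn.lt_or_gt with h | h
  exacts [key h, (key h).symm]

theorem ENNReal.tsum_eq_of_eq_add_of_tendsto_zero {r c : ℕ → ℝ≥0∞}
    (h : ∀ n, r n = r (n + 1) + c n) (hr : Tendsto r atTop (𝓝 0)) : ∑' n, c n = r 0 := by
  have partial_sums : ∀ n, r n + ∑ m ∈ Finset.range n, c m = r 0 := fun n => by
    induction n with
    | zero => simp
    | succ n ih => rw [Finset.sum_range_succ, ← ih, h n]; ring
  have hlim := hr.add (ENNReal.tendsto_nat_tsum c)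
  simp only [partial_sums, zero_add] at hlim
  exact tendsto_nhds_unique hlim tendsto_const_nhds

theorem tsum_pair_eq_tsum_ite_unpair {M : Type*} [AddCommMonoid M] [TopologicalSpace M]
    (f : ℕ → M) (j : ℕ) : ∑' k, f (Nat.pair j k) = ∑' n, if j = n.unpair.1 then f n else 0 := by
  have hsupp : support (fun n => if j = n.unpair.1 then f n else 0) ⊆ range (Nat.pair j) :=
    fun n hn => ⟨n.unpair.2, by
      rw [show j = n.unpair.1 by by_contra h; exact hn (if_neg h), Nat.pair_unpair]⟩
  rw [← Injective.tsum_eq (fun k l h => (Nat.pair_eq_pair.1 h).2) hsupp]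
  simp only [Nat.unpair_pair, if_true]

theorem ENNReal.tendsto_zero_of_antitone_of_lt_inv_unpair {r : ℕ → ℕ → ℝ≥0∞}
    (hanti : ∀ j, Antitone fun n => r n j)
    (hsmall : ∀ n, r (n + 1) n.unpair.1 < (n.unpair.2 : ℝ≥0∞)⁻¹) (j : ℕ) :
    Tendsto (fun n => r n j) atTop (𝓝 0) := by
  refine ENNReal.tendsto_atTop_zero.2 fun ε hε => ?_
  obtain ⟨k, hk⟩ := ENNReal.exists_inv_nat_lt hε.ne'
  refine ⟨Nat.pair j k + 1, fun n hn => (hanti j hn).trans ?_⟩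
  have := hsmall (Nat.pair j k)
  rw [Nat.unpair_pair] at this
  exact (this.trans hk).le

namespace ZeroDimensional

variable {X : Type*} [TopologicalSpace X] [MeasurableSpace X] {μ : Measure X} [μ.OuterRegular]
  [NullSingletonClass μ]

theorem exists_isClopen_measure_lt_iUnion_eq (hX : ZeroDimensional X) {C : Set X} (hC : IsOpen C)
    {δ : ℝ≥0∞} (hδ : δ ≠ 0) :
    ∃ e : ℕ → Set X, (∀ j, IsClopen (e j)) ∧ (∀ j, μ (e j) < δ) ∧ ⋃ j, e j = C := by
  obtain ⟨b, hb_countable, hb_clopen, hb⟩ := hX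
  have hS : ∀ s ∈ insert ∅ {s ∈ b | s ⊆ C ∧ μ s < δ}, IsClopen s ∧ s ⊆ C ∧ μ s < δ := by
    rintro s (rfl | ⟨hsb, hsC, hsδ⟩)
    · exact ⟨isClopen_empty, empty_subset C, by simpa using pos_iff_ne_zero.2 hδ⟩
    · exact ⟨hb_clopen s hsb, hsC, hsδ⟩
  obtain ⟨e, he⟩ :=
    ((hb_countable.mono (sep_subset _ _)).insert ∅).exists_eq_range (insert_nonempty _ _)
  rw [he] at hS
  refine ⟨e, fun j => (hS _ (mem_range_self j)).1, fun j => (hS _ (mem_range_self j)).2.2,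
    (iUnion_subset fun j => (hS _ (mem_range_self j)).2.1).antisymm fun x hx => ?_⟩
  obtain ⟨O, hxO, hO, hOδ⟩ := exists_isOpen_lt_of_lt (μ := μ) {x} δ
    (by simpa using pos_iff_ne_zero.2 hδ)
  obtain ⟨s, hsb, hxs, hsO⟩ := hb.exists_subset_of_mem_open (mem_inter (hxO rfl) hx) (hO.inter hC)
  have hs : s ∈ range e := he ▸ Or.inr
    ⟨hsb, fun y hy => (hsO hy).2, (measure_mono fun y hy => (hsO hy).1).trans_lt hOδ⟩
  obtain ⟨j, rfl⟩ := hs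
  exact mem_iUnion.2 ⟨j, hxs⟩

theorem exists_isClopen_subset_measure_le_lt_add (hX : ZeroDimensional X) {C : Set X}
    (hC : IsOpen C) {t δ : ℝ≥0∞} (htC : t ≤ μ C) (ht : t ≠ ∞) (hδ : δ ≠ 0) :
    ∃ E ⊆ C, IsClopen E ∧ μ E ≤ t ∧ t < μ E + δ := by
  obtain ⟨e, he_clopen, he_small, rfl⟩ := hX.exists_isClopen_measure_lt_iUnion_eq (μ := μ) hC hδ
  let F : ℕ → Set X := fun N => ⋃ j < N, e j
  have hF_mono : Monotone F := fun M N hMN => biUnion_subset_biUnion_left fun j hj =>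
    lt_of_lt_of_le hj hMN
  have hF_union : ⋃ N, F N = ⋃ j, e j := by
    refine (iUnion_subset fun N => iUnion₂_subset fun j _ => subset_iUnion e j).antisymm ?_
    exact iUnion_subset fun j x hx => mem_iUnion.2 ⟨j + 1, mem_iUnion₂.2 ⟨j, lt_add_one j, hx⟩⟩
  have hlim : Tendsto (fun N => μ (F N) + δ) atTop (𝓝 (μ (⋃ j, e j) + δ)) := by
    rw [← hF_union]
    exact (tendsto_measure_iUnion_atTop hF_mono).add_const δ
  have hex : ∃ N, t < μ (F N) + δ := (hlim.eventually (lt_mem_nhds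
    ((ENNReal.lt_add_right ht hδ).trans_le (by gcongr)))).exists
  refine ⟨F (Nat.find hex), iUnion₂_subset fun j _ => subset_iUnion e j,
    (finite_lt_nat _).isClopen_biUnion fun j _ => he_clopen j, ?_,
    Nat.find_spec hex⟩
  rcases hN : Nat.find hex with _ | m
  · simp [F]
  · have hm : μ (F m) + δ ≤ t := not_lt.1 (Nat.find_min hex (hN ▸ Nat.lt_succ_self m))
    calc μ (F (m + 1)) ≤ μ (F m) + μ (e m) := by
          simpa only [F, biUnion_lt_succ] using measure_union_le _ _
      _ ≤ μ (F m) + δ := by gcongr; exact (he_small m).le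
      _ ≤ t := hm

variable [OpensMeasurableSpace X] [IsFiniteMeasure μ]

theorem exists_isClopen_sdiff_of_measure_eq_tsum (hX : ZeroDimensional X) {ι : Type*}
    [DecidableEq ι] {K : Set X} (hK : IsOpen K) {r : ι → ℝ≥0∞} (hr : μ K = ∑' j, r j) (i : ι)
    {δ : ℝ≥0∞} (hδ : δ ≠ 0) :
    ∃ K' ⊆ K, ∃ r' : ι → ℝ≥0∞, (IsOpen K' ∧ μ K' = ∑' j, r' j) ∧ IsClopen (K \ K') ∧
      (∀ j, r j = r' j + if j = i then μ (K \ K') else 0) ∧ r' i < δ := by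
  have hri : r i ≤ μ K := hr ▸ ENNReal.le_tsum i
  obtain ⟨E, hEK, hE, hEr, hrE⟩ := hX.exists_isClopen_subset_measure_le_lt_add hK hri
    (ne_top_of_le_ne_top (measure_ne_top μ K) hri) hδ
  set r' := update r i (r i - μ E)
  have hsplit : ∀ j, r j = r' j + if j = i then μ E else 0 := fun j => by
    by_cases hj : j = i
    · subst hj; simp [r', tsub_add_cancel_of_le hEr]
    · simp [r', hj]
  have hsum : ∑' j, r j = (∑' j, r' j) + μ E := by
    rw [tsum_congr hsplit, ENNReal.tsum_add, tsum_ite_eq]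
  have hμ : μ (K \ E) + μ E = (∑' j, r' j) + μ E := by
    rw [← hsum, ← hr]
    simpa only [inter_eq_self_of_subset_right hEK] using
      measure_sdiff_add_inter (μ := μ) K hE.isClosed.measurableSet
  refine ⟨K \ E, sdiff_subset, r', ⟨hK.sdiff hE.isClosed, (ENNReal.add_left_inj
    (measure_ne_top μ E)).1 hμ⟩, by rwa [sdiff_sdiff_cancel_left hEK], ?_, ?_⟩
  · rwa [sdiff_sdiff_cancel_left hEK]
  · simpa [r'] using ENNReal.sub_lt_of_lt_add hEr (add_comm (μ E) δ ▸ hrE)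

theorem exists_pairwise_disjoint_isOpen_measure_eq (hX : ZeroDimensional X) {A : Set X}
    (hA : IsOpen A) {r : ℕ → ℝ≥0∞} (hr : μ A = ∑' j, r j) :
    ∃ V : ℕ → Set X, (∀ j, IsOpen (V j)) ∧ (∀ j, V j ⊆ A) ∧ Pairwise (Disjoint on V) ∧
      ∀ j, μ (V j) = r j := by
  obtain ⟨p, hp₀, hp⟩ := exists_seq_of_forall_exists
    (P := fun p : Set X × (ℕ → ℝ≥0∞) => IsOpen p.1 ∧ μ p.1 = ∑' j, p.2 j)
    (R := fun n p q => q.1 ⊆ p.1 ∧ IsClopen (p.1 \ q.1) ∧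
      (∀ j, p.2 j = q.2 j + if j = n.unpair.1 then μ (p.1 \ q.1) else 0) ∧
      q.2 n.unpair.1 < (n.unpair.2 : ℝ≥0∞)⁻¹)
    (a := (A, r)) ⟨hA, hr⟩ fun n p hp => by
      obtain ⟨K', hK', r', hP, hR⟩ := hX.exists_isClopen_sdiff_of_measure_eq_tsum hp.1 hp.2
        n.unpair.1 (ENNReal.inv_ne_zero.2 (ENNReal.natCast_ne_top _))
      exact ⟨(K', r'), hP, hK', hR⟩
  set E : ℕ → Set X := fun n => (p n).1 \ (p (n + 1)).1
  have hK_anti : Antitone fun n => (p n).1 := antitone_nat_of_succ_le fun n => (hp n).2.1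
  have hE_disj : Pairwise (Disjoint on E) := hK_anti.pairwise_disjoint_on_sdiff_succ
  have hK₀ : (p 0).1 = A := by rw [hp₀]
  have hE_clopen : ∀ n, IsClopen (E n) := fun n => (hp n).2.2.1
  have hrem : ∀ j, Tendsto (fun n => (p n).2 j) atTop (𝓝 0) :=
    ENNReal.tendsto_zero_of_antitone_of_lt_inv_unpair
      (fun j => antitone_nat_of_succ_le fun n => ((hp n).2.2.2.1 j).symm ▸ le_self_add)
      fun n => (hp n).2.2.2.2
  refine ⟨fun j => ⋃ k, E (Nat.pair j k), fun j => isOpen_iUnion fun k => (hE_clopen _).isOpen,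
    fun j => iUnion_subset fun k => sdiff_subset.trans (hK₀ ▸ hK_anti (Nat.zero_le _)),
    fun i j hij => disjoint_iUnion_left.2 fun k => disjoint_iUnion_right.2 fun l =>
      hE_disj fun h => hij (Nat.pair_eq_pair.1 h).1, fun j => ?_⟩
  calc μ (⋃ k, E (Nat.pair j k))
      = ∑' k, μ (E (Nat.pair j k)) := measure_iUnion
        (fun k l hkl => hE_disj fun h => hkl (Nat.pair_eq_pair.1 h).2)
        fun k => (hE_clopen _).isOpen.measurableSet
    _ = ∑' n, if j = n.unpair.1 then μ (E n) else 0 :=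
        tsum_pair_eq_tsum_ite_unpair (fun n => μ (E n)) j
    _ = r j := by
        simpa [hp₀] using ENNReal.tsum_eq_of_eq_add_of_tendsto_zero
          (fun n => (hp n).2.2.2.1 j) (hrem j)

end ZeroDimensional

theorem IsClosed.isClopen_preimage_val_of_disjoint_sdiff_iUnion {X ι : Type*}
    [TopologicalSpace X] {A Y : Set X} {V : ι → Set X} (hA : IsClosed A)
    (hV : ∀ i, IsOpen (V i)) (hVA : ∀ i, V i ⊆ A) (hV_disj : Pairwise (Disjoint on V))
    (hY : Disjoint Y (A \ ⋃ i, V i)) (i : ι) : IsClopen (Subtype.val ⁻¹' V i : Set Y) := by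
  have hVi : (Subtype.val ⁻¹' V i : Set Y) = Subtype.val ⁻¹' (A \ ⋃ (j) (_ : j ≠ i), V j) := by
    ext ⟨x, hx⟩
    simp only [mem_preimage, Set.mem_sdiff, mem_iUnion, not_exists]
    refine ⟨fun hxi => ⟨hVA i hxi, fun j hji hxj => disjoint_left.1 (hV_disj hji) hxj hxi⟩, ?_⟩
    rintro ⟨hxA, hx_other⟩
    obtain ⟨j, hxj⟩ : ∃ j, x ∈ V j := by
      by_contra h
      exact disjoint_left.1 hY hx ⟨hxA, by simpa using h⟩
    by_cases hji : j = i
    · exact hji ▸ hxj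
    · exact absurd hxj (hx_other j hji)
  refine ⟨?_, (hV i).preimage continuous_subtype_val⟩
  rw [hVi]
  exact (hA.sdiff (isOpen_iUnion fun j => isOpen_iUnion fun _ => hV j)).preimage
    continuous_subtype_val

namespace DynSys

variable {X : Type*} [TopologicalSpace X] [MeasurableSpace X] (D : DynSys X)

instance : IsProbabilityMeasure D.μ := D.prob

instance : NullSingletonClass D.μ := D.noAtoms

instance : D.μ.IsOpenPosMeasure := ⟨fun U hU hne => (D.fullSupport U hU hne).ne'⟩

theorem iter_zero : D.iter 0 = id := by
  ext x
  simp [iter]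

theorem iter_add_one (k : ℤ) : D.iter (k + 1) = D.iter k ∘ D.T := by
  ext x
  simp [iter, zpow_add_one, Equiv.Perm.mul_apply]

theorem iter_sub_one (k : ℤ) : D.iter (k - 1) = D.iter k ∘ D.T.symm := by
  ext x
  simp [iter, zpow_sub_one, Equiv.Perm.mul_apply, Equiv.Perm.inv_def]

theorem continuous_iter (k : ℤ) : Continuous (D.iter k) := by
  induction k using Int.induction_on with
  | zero => rw [iter_zero]; exact continuous_id
  | succ k ih => rw [iter_add_one]; exact ih.comp D.T.continuous
  | pred k ih => rw [iter_sub_one]; exact ih.comp D.T.symm.continuous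

variable [BorelSpace X]

theorem quasiMeasurePreserving_symm : Measure.QuasiMeasurePreserving D.T.symm D.μ D.μ :=
  ⟨D.T.symm.continuous.measurable, D.rnDeriv ▸ withDensity_absolutelyContinuous _ _⟩

theorem quasiMeasurePreserving_T : Measure.QuasiMeasurePreserving D.T D.μ D.μ := by
  refine ⟨D.T.continuous.measurable, ?_⟩
  have hμ : D.μ ≪ D.μ.map D.T.symm := D.rnDeriv ▸ withDensity_absolutelyContinuous'
    (ENNReal.continuous_ofReal.comp D.ωCont).measurable.aemeasurable
    (ae_of_all _ fun x => (ENNReal.ofReal_pos.2 (D.ωPos x)).ne')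
  simpa [Measure.map_map D.T.continuous.measurable D.T.symm.continuous.measurable] using
    hμ.map D.T.continuous.measurable

theorem quasiMeasurePreserving_iter (k : ℤ) :
    Measure.QuasiMeasurePreserving (D.iter k) D.μ D.μ := by
  induction k using Int.induction_on with
  | zero => rw [iter_zero]; exact Measure.QuasiMeasurePreserving.id D.μ
  | succ k ih => rw [iter_add_one]; exact ih.comp D.quasiMeasurePreserving_T
  | pred k ih => rw [iter_sub_one]; exact ih.comp D.quasiMeasurePreserving_symm

theorem exists_inessRed_disjoint [BaireSpace X] {L : Set X} (hL : IsClosed L)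
    (hL₀ : D.μ L = 0) : ∃ X' : Set X, D.InessRed X' ∧ Disjoint X' L := by
  have hnull : ∀ k, D.μ (D.iter k ⁻¹' L) = 0 := fun k =>
    (D.quasiMeasurePreserving_iter k).preimage_null hL₀
  have hopen : ∀ k, IsOpen (D.iter k ⁻¹' L)ᶜ := fun k =>
    (hL.preimage (D.continuous_iter k)).isOpen_compl
  have hdense : ∀ k, Dense (D.iter k ⁻¹' L)ᶜ := fun k =>
    interior_eq_empty_iff_dense_compl.1 (Measure.interior_eq_empty_of_null (hnull k))
  refine ⟨⋂ k : ℤ, (D.iter k ⁻¹' L)ᶜ, ⟨?_, dense_iInter_of_isOpen hopen hdense,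
    IsGδ.iInter fun k => (hopen k).isGδ, ?_⟩, ?_⟩
  · ext x
    simp only [mem_preimage, mem_iInter, mem_compl_iff, ← comp_apply (f := D.iter _),
      ← iter_add_one]
    exact (Equiv.addRight (1 : ℤ)).forall_congr fun k => Iff.rfl
  · rw [← prob_compl_eq_zero_iff (MeasurableSet.iInter fun k => (hopen k).measurableSet),
      compl_iInter]
    simpa using measure_iUnion_null hnull
  · exact disjoint_left.2 fun x hx => by simpa [iter_zero] using mem_iInter.1 hx 0

end DynSys

theorem clopen_partition_prescribed_measures_general {X : Type*}
    [TopologicalSpace X] [PolishSpace X] [MeasurableSpace X] [BorelSpace X]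
    (D : DynSys X) (hzd : ZeroDimensional X)
    (A : Set X) (hA : IsClopen A) (a : ℕ → ℝ)
    (hsum : D.μ A = ∑' i, ENNReal.ofReal (a i)) :
    ∃ X' : Set X, D.InessRed X' ∧ ∃ P : ℕ → Set X,
      (∀ i j, i ≠ j → Disjoint (P i) (P j)) ∧
      (⋃ i, P i) = A ∩ X' ∧
      (∀ i, IsClopen (Subtype.val ⁻¹' (P i) : Set X')) ∧
      (∀ i, D.μ (P i) = ENNReal.ofReal (a i)) := by
  obtain ⟨V, hV_open, hVA, hV_disj, hVμ⟩ :=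
    hzd.exists_pairwise_disjoint_isOpen_measure_eq hA.isOpen hsum
  have hV_meas : MeasurableSet (⋃ i, V i) := .iUnion fun i => (hV_open i).measurableSet
  have hL₀ : D.μ (A \ ⋃ i, V i) = 0 := by
    rw [measure_sdiff (iUnion_subset hVA) hV_meas.nullMeasurableSet (measure_ne_top _ _),
      measure_iUnion hV_disj fun i => (hV_open i).measurableSet, tsum_congr hVμ, hsum, tsub_self]
  obtain ⟨X', hX', hX'L⟩ :=
    D.exists_inessRed_disjoint (hA.isClosed.sdiff (isOpen_iUnion hV_open)) hL₀
  have hX'_conull : D.μ X'ᶜ = 0 :=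
    (prob_compl_eq_zero_iff hX'.2.2.1.measurableSet).2 hX'.2.2.2
  refine ⟨X', hX', fun i => V i ∩ X',
    fun i j hij => (hV_disj hij).mono inter_subset_left inter_subset_left, ?_,
    fun i => ?_, fun i => (measure_inter_conull hX'_conull).trans (hVμ i)⟩
  · refine (iUnion_inter X' V).symm.trans (Subset.antisymm
      (inter_subset_inter_left X' (iUnion_subset hVA)) fun x ⟨hxA, hx⟩ => ⟨?_, hx⟩)
    by_contra hxV
    exact disjoint_left.1 hX'L hx ⟨hxA, hxV⟩
  · rw [Subtype.preimage_coe_inter_self]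
    exact hA.isClosed.isClopen_preimage_val_of_disjoint_sdiff_iUnion hV_open hVA hV_disj hX'L i

/-- **Lemma 1.2.** A clopen set `A` with `μ(A) = Σ aᵢ`, `aᵢ > 0`, can be partitioned,
on an inessential reduction, into relatively clopen sets of measures `aᵢ`. -/
theorem clopen_partition_prescribed_measures {X : Type*}
    [TopologicalSpace X] [PolishSpace X] [MeasurableSpace X] [BorelSpace X]
    (D : DynSys X) (hzd : ZeroDimensional X)
    (A : Set X) (hA : IsClopen A) (a : ℕ → ℝ) (ha : ∀ i, 0 < a i)
    (hsum : D.μ A = ∑' i, ENNReal.ofReal (a i)) :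
    ∃ X' : Set X, D.InessRed X' ∧ ∃ P : ℕ → Set X,
      (∀ i j, i ≠ j → Disjoint (P i) (P j)) ∧
      (⋃ i, P i) = A ∩ X' ∧
      (∀ i, IsClopen (Subtype.val ⁻¹' (P i) : Set X')) ∧
      (∀ i, D.μ (P i) = ENNReal.ofReal (a i)) :=
  clopen_partition_prescribed_measures_general D hzd A hA a hsum
end

section
/- Let (X, μ, T) be a dynamical system with X 0-dimensional, and suppose T preserves μ (μ∘T⁻¹ = μ). Let A and B be two non-empty clopen subsets of X with μ(A) = μ(B). Then there exist open subsets A' ⊂ A and B' ⊂ B with μ(A∖A') = μ(B∖B') = 0 and a homeomorphism S : A' → B' which belongs to the topological full groupoid [[T]]_top, i.e. S(x) = T^{a(x)}x for a function a : A' → ℤ continuous on A'. -/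
open MeasureTheory Topology

/-!
Match `A` with `B` greedily along the orbit: at stage `n`, every point of `A` not yet matched
whose image under `Tⁿ` lies in the still unmatched part of `B` is sent there by `Tⁿ`. Each stage
cuts out clopen sets, so the matched parts `A'` and `B'` are open and the matching is locally a
power of `T`; since `T` preserves `μ`, `μ A' = μ B'`. No forward orbit from the unmatched part of
`A` ever meets the unmatched part of `B`, so by ergodicity one of the two is null, and then
`μ A = μ B` forces the other to be null as well.
-/

open MeasureTheory Topology Set Function
open scoped ENNReal

namespace Homeomorph

variable {X : Type*} [TopologicalSpace X]

theorem coe_pow (f : X ≃ₜ X) (n : ℕ) : ⇑(f ^ n) = (⇑f)^[n] := by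
  induction n with
  | zero => rfl
  | succ n ih => rw [pow_succ, iterate_succ, ← ih]; rfl

theorem toEquiv_zpow (f : X ≃ₜ X) (n : ℤ) : (f ^ n).toEquiv = f.toEquiv ^ n :=
  map_zpow ({ toFun := toEquiv, map_one' := rfl, map_mul' := fun _ _ => rfl } :
    (X ≃ₜ X) →* Equiv.Perm X) f n

theorem continuous_zpow_apply (f : X ≃ₜ X) : Continuous fun p : ℤ × X => (f ^ p.1) p.2 :=
  continuous_prod_of_discrete_left.mpr fun n => (f ^ n).continuous

end Homeomorph

theorem Ergodic.measure_eq_zero_or_of_disjoint_preimage_iterate {α : Type*}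
    [MeasurableSpace α] {μ : Measure α} [IsFiniteMeasure μ] {f : α → α} (hf : Ergodic f μ)
    {s t : Set α} (ht : MeasurableSet t) (hst : ∀ n, Disjoint s (f^[n + 1] ⁻¹' t)) :
    μ s = 0 ∨ μ t = 0 := by
  set G := ⋃ n, f^[n + 1] ⁻¹' t
  have hG : MeasurableSet G := .iUnion fun n => ht.preimage (hf.measurable.iterate _)
  have hfG : f ⁻¹' G ⊆ G := by
    intro x hx
    obtain ⟨n, hn⟩ := mem_iUnion.1 hx
    exact mem_iUnion.2 ⟨n + 1, by rwa [mem_preimage, iterate_succ_apply]⟩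
  rcases hf.ae_empty_or_univ_of_preimage_ae_le hG.nullMeasurableSet hfG.eventuallyLE with h | h
  · rw [← hf.measure_preimage ht.nullMeasurableSet]
    exact .inr <| measure_mono_null (subset_iUnion (fun n => f^[n + 1] ⁻¹' t) 0)
      (ae_eq_empty.mp h)
  · exact .inl <| measure_mono_null (subset_compl_iff_disjoint_right.mpr
      (disjoint_iUnion_right.mpr hst)) (ae_eq_univ.mp h)

theorem measure_sdiff_eq_measure_sdiff {α : Type*} [MeasurableSpace α] {μ : Measure α}
    {A A' B B' : Set α} (hA' : A' ⊆ A) (hB' : B' ⊆ B) (hA'm : NullMeasurableSet A' μ)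
    (hB'm : NullMeasurableSet B' μ) (hA : μ A ≠ ∞) (hAB : μ A = μ B)
    (hAB' : μ A' = μ B') :
    μ (A \ A') = μ (B \ B') := by
  have hB : μ B ≠ ∞ := hAB ▸ hA
  rw [measure_sdiff hA' hA'm (ne_top_of_le_ne_top hA (measure_mono hA')),
    measure_sdiff hB' hB'm (ne_top_of_le_ne_top hB (measure_mono hB')), hAB, hAB']

section MemIndex

variable {X : Type*} {P : ℕ → Set X}

open Classical in
/-- The index of a member of `P` containing `x`, with junk value `0` if there is none. -/
noncomputable def memIndex (P : ℕ → Set X) (x : X) : ℕ :=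
  if h : ∃ n, x ∈ P n then Nat.find h else 0

theorem memIndex_eq (hP : Pairwise (Disjoint on P)) {n : ℕ} {x : X} (hx : x ∈ P n) :
    memIndex P x = n := by
  classical
  have h : ∃ n, x ∈ P n := ⟨n, hx⟩
  rw [memIndex, dif_pos h]
  by_contra hne
  exact disjoint_left.1 (hP hne) (Nat.find_spec h) hx

theorem continuousOn_memIndex [TopologicalSpace X] (hP : Pairwise (Disjoint on P))
    (hPo : ∀ n, IsOpen (P n)) : ContinuousOn (memIndex P) (⋃ n, P n) := by
  intro x hx
  obtain ⟨n, hn⟩ := mem_iUnion.1 hx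
  exact (continuousAt_const.congr (Filter.eventually_of_mem ((hPo n).mem_nhds hn)
    fun y hy => (memIndex_eq hP hy).symm)).continuousWithinAt

end MemIndex

theorem invOn_iUnion_image {ι X : Type*} {P : ι → Set X} {e e' : ι → X → X}
    {S S' : X → X} (he : ∀ i, LeftInvOn (e' i) (e i) (P i)) (hS : ∀ i, EqOn S (e i) (P i))
    (hS' : ∀ i, EqOn S' (e' i) (e i '' P i)) :
    InvOn S' S (⋃ i, P i) (⋃ i, e i '' P i) := by
  constructor
  · intro x hx
    obtain ⟨i, hi⟩ := mem_iUnion.1 hx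
    rw [hS i hi, hS' i (mem_image_of_mem _ hi), he i hi]
  · intro y hy
    obtain ⟨i, x, hx, rfl⟩ := mem_iUnion.1 hy
    rw [hS' i (mem_image_of_mem _ hx), he i hx, hS i hx]

theorem mapsTo_iUnion_image {ι X : Type*} {P : ι → Set X} {e : ι → X → X} {S : X → X}
    (hS : ∀ i, EqOn S (e i) (P i)) : MapsTo S (⋃ i, P i) (⋃ i, e i '' P i) := by
  intro x hx
  obtain ⟨i, hi⟩ := mem_iUnion.1 hx
  exact mem_iUnion.2 ⟨i, hS i hi ▸ mem_image_of_mem _ hi⟩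

theorem mapsTo_iUnion_image_of_leftInvOn {ι X : Type*} {P : ι → Set X} {e e' : ι → X → X}
    {S' : X → X} (he : ∀ i, LeftInvOn (e' i) (e i) (P i))
    (hS' : ∀ i, EqOn S' (e' i) (e i '' P i)) : MapsTo S' (⋃ i, e i '' P i) (⋃ i, P i) := by
  intro y hy
  obtain ⟨i, x, hx, rfl⟩ := mem_iUnion.1 hy
  exact mem_iUnion.2 ⟨i, by rwa [hS' i (mem_image_of_mem _ hx), he i hx]⟩

namespace GreedyMatching

variable {X : Type*} (g : ℕ → X → X) (A B : Set X)

/-- The parts of `A` and of `B` matched during the first `n` stages. -/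
def stage : ℕ → Set X × Set X
  | 0 => (∅, ∅)
  | n + 1 =>
    let P := (A \ (stage n).1) ∩ g n ⁻¹' (B \ (stage n).2)
    ((stage n).1 ∪ P, (stage n).2 ∪ g n '' P)

/-- The points of `A` matched at stage `n`, each `x` with `g n x`. -/
def piece (n : ℕ) : Set X :=
  (A \ (stage g A B n).1) ∩ g n ⁻¹' (B \ (stage g A B n).2)

def source : Set X := ⋃ n, piece g A B n

def target : Set X := ⋃ n, g n '' piece g A B n

theorem stage_succ (n : ℕ) : stage g A B (n + 1) =
    ((stage g A B n).1 ∪ piece g A B n, (stage g A B n).2 ∪ g n '' piece g A B n) := rfl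

theorem stage_eq (n : ℕ) :
    stage g A B n = (⋃ k < n, piece g A B k, ⋃ k < n, g k '' piece g A B k) := by
  induction n with
  | zero => simp [stage]
  | succ n ih => rw [stage_succ, ih, biUnion_lt_succ, biUnion_lt_succ]

theorem piece_eq (n : ℕ) : piece g A B n =
    (A \ ⋃ k < n, piece g A B k) ∩ g n ⁻¹' (B \ ⋃ k < n, g k '' piece g A B k) := by
  rw [piece, stage_eq]

theorem source_subset : source g A B ⊆ A :=
  iUnion_subset fun _ _ hx => hx.1.1

theorem target_subset : target g A B ⊆ B :=
  iUnion_subset fun _ => image_subset_iff.2 fun _ hx => hx.2.1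

theorem pairwise_disjoint_piece : Pairwise (Disjoint on piece g A B) := by
  refine (pairwise_disjoint_on _).2 fun m n hmn => ?_
  rw [piece_eq g A B n]
  exact (disjoint_sdiff_right.mono_left (subset_iUnion₂ (s := fun k (_ : k < n) =>
    piece g A B k) m hmn)).inter_right _

theorem pairwise_disjoint_image_piece :
    Pairwise (Disjoint on fun n => g n '' piece g A B n) := by
  refine (pairwise_disjoint_on _).2 fun m n hmn => ?_
  have hn : g n '' piece g A B n ⊆ B \ ⋃ k < n, g k '' piece g A B k := by
    rw [image_subset_iff, piece_eq]
    exact inter_subset_right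
  exact (disjoint_sdiff_right.mono_left (subset_iUnion₂ (s := fun k (_ : k < n) =>
    g k '' piece g A B k) m hmn)).mono_right hn

theorem disjoint_sdiff_source_preimage_sdiff_target (n : ℕ) :
    Disjoint (A \ source g A B) (g n ⁻¹' (B \ target g A B)) := by
  rw [disjoint_left]
  rintro x ⟨hxA, hxs⟩ ⟨hgxB, hgxt⟩
  refine hxs (mem_iUnion_of_mem n ?_)
  rw [piece_eq]
  exact ⟨⟨hxA, fun h => hxs (iUnion₂_subset_iUnion _ _ h)⟩,
    hgxB, fun h => hgxt (iUnion₂_subset_iUnion _ _ h)⟩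

section Topology

variable [TopologicalSpace X] {g A B}

theorem isClopen_stage (hA : IsClopen A) (hB : IsClopen B) (hgc : ∀ n, Continuous (g n))
    (hgo : ∀ n, IsOpenMap (g n)) (hgcl : ∀ n, IsClosedMap (g n)) (n : ℕ) :
    IsClopen (stage g A B n).1 ∧ IsClopen (stage g A B n).2 := by
  induction n with
  | zero => exact ⟨isClopen_empty, isClopen_empty⟩
  | succ n ih =>
    have hP : IsClopen (piece g A B n) := (hA.diff ih.1).inter ((hB.diff ih.2).preimage (hgc n))
    exact ⟨ih.1.union hP, ih.2.union ⟨hgcl n _ hP.1, hgo n _ hP.2⟩⟩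

theorem isClopen_piece (hA : IsClopen A) (hB : IsClopen B) (hgc : ∀ n, Continuous (g n))
    (hgo : ∀ n, IsOpenMap (g n)) (hgcl : ∀ n, IsClosedMap (g n)) (n : ℕ) :
    IsClopen (piece g A B n) ∧ IsClopen (g n '' piece g A B n) := by
  have h := isClopen_stage hA hB hgc hgo hgcl n
  have hP : IsClopen (piece g A B n) := (hA.diff h.1).inter ((hB.diff h.2).preimage (hgc n))
  exact ⟨hP, hgcl n _ hP.1, hgo n _ hP.2⟩

theorem isClopen_piece_iterate (f : X ≃ₜ X) (hA : IsClopen A) (hB : IsClopen B) (n : ℕ) :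
    IsClopen (piece (fun n => (⇑f)^[n]) A B n) ∧
      IsClopen ((⇑f)^[n] '' piece (fun n => (⇑f)^[n]) A B n) :=
  isClopen_piece hA hB (fun n => f.continuous.iterate n)
    (fun n => f.coe_pow n ▸ (f ^ n).isOpenMap) (fun n => f.coe_pow n ▸ (f ^ n).isClosedMap) n

end Topology

theorem measure_target_eq_measure_source [MeasurableSpace X] {μ : Measure X} {g A B}
    (hP : ∀ n, MeasurableSet (piece g A B n)) (hQ : ∀ n, MeasurableSet (g n '' piece g A B n))
    (hinj : ∀ n, Injective (g n)) (hg : ∀ n, MeasurePreserving (g n) μ μ) :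
    μ (target g A B) = μ (source g A B) := by
  rw [target, source, measure_iUnion (pairwise_disjoint_image_piece g A B) hQ,
    measure_iUnion (pairwise_disjoint_piece g A B) hP]
  refine tsum_congr fun n => ?_
  rw [← (hg n).measure_preimage (hQ n).nullMeasurableSet, preimage_image_eq _ (hinj n)]

theorem measure_sdiff_eq_zero [MeasurableSpace X] {μ : Measure X} [IsFiniteMeasure μ]
    {f : X → X} (hf : Ergodic f μ) {A B : Set X} (hB : MeasurableSet B)
    (hs : NullMeasurableSet (source (f^[·]) A B) μ) (ht : MeasurableSet (target (f^[·]) A B))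
    (hst : μ (target (f^[·]) A B) = μ (source (f^[·]) A B)) (hAB : μ A = μ B) :
    μ (A \ source (f^[·]) A B) = 0 ∧ μ (B \ target (f^[·]) A B) = 0 := by
  have heq := measure_sdiff_eq_measure_sdiff (source_subset _ A B) (target_subset _ A B) hs
    ht.nullMeasurableSet (measure_ne_top μ A) hAB hst.symm
  rcases hf.measure_eq_zero_or_of_disjoint_preimage_iterate (hB.diff ht)
    fun n => disjoint_sdiff_source_preimage_sdiff_target _ A B (n + 1) with h | h
  · exact ⟨h, heq.symm.trans h⟩
  · exact ⟨heq.trans h, h⟩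

end GreedyMatching

namespace DynSys

variable {X : Type*} [TopologicalSpace X] [MeasurableSpace X] (D : DynSys X)

theorem iter_eq_coe_zpow (n : ℤ) : D.iter n = ⇑(D.T ^ n) := by
  funext x
  rw [iter, ← Homeomorph.toEquiv_zpow, Homeomorph.coe_toEquiv]

theorem iter_natCast (n : ℕ) : D.iter n = (⇑D.T)^[n] := by
  rw [iter_eq_coe_zpow, zpow_natCast, Homeomorph.coe_pow]

theorem iter_neg_natCast (n : ℕ) : D.iter (-n) = (⇑D.T.symm)^[n] := by
  rw [iter_eq_coe_zpow, zpow_neg, zpow_natCast, ← inv_pow, Homeomorph.coe_pow]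
  rfl

theorem continuousOn_iter_apply {a : X → ℤ} {s : Set X} (ha : ContinuousOn a s) :
    ContinuousOn (fun x => D.iter (a x) x) s := by
  simp only [iter_eq_coe_zpow]
  exact D.T.continuous_zpow_apply.comp_continuousOn (ha.prodMk continuousOn_id)

theorem ergodic_of_measurePreserving (hT : MeasurePreserving D.T D.μ D.μ) :
    Ergodic D.T D.μ := by
  have := D.prob
  refine ⟨hT, ⟨fun s hs hinv => Filter.eventuallyConst_set'.mpr ?_⟩⟩
  rcases D.ergodic s hs hinv with h | h
  · exact .inl (ae_eq_empty.mpr h)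
  · exact .inr (ae_eq_univ.mpr ((prob_compl_eq_zero_iff hs).mpr h))

end DynSys

open GreedyMatching in
theorem exists_full_groupoid_homeo_measure_preserving_general {X : Type*}
    [TopologicalSpace X] [MeasurableSpace X] [BorelSpace X]
    (D : DynSys X)
    (hmp : Measure.map (⇑D.T) D.μ = D.μ)
    (A B : Set X) (hA : IsClopen A) (hB : IsClopen B)
    (hAB : D.μ A = D.μ B) :
    ∃ (A' B' : Set X) (S S' : X → X) (a : X → ℤ),
      IsOpen A' ∧ A' ⊆ A ∧ IsOpen B' ∧ B' ⊆ B ∧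
      D.μ (A \ A') = 0 ∧ D.μ (B \ B') = 0 ∧
      Set.BijOn S A' B' ∧ ContinuousOn S A' ∧ ContinuousOn S' B' ∧
      Set.InvOn S' S A' B' ∧
      ContinuousOn a A' ∧ (∀ x ∈ A', S x = D.iter (a x) x) := by
  have := D.prob
  have hT : MeasurePreserving D.T D.μ D.μ := ⟨D.T.continuous.measurable, hmp⟩
  set g : ℕ → X → X := fun n => (⇑D.T)^[n]
  have hPo (n : ℕ) : IsOpen (piece g A B n) := (isClopen_piece_iterate D.T hA hB n).1.isOpen
  have hQo (n : ℕ) : IsOpen (g n '' piece g A B n) :=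
    (isClopen_piece_iterate D.T hA hB n).2.isOpen
  have hμ := measure_target_eq_measure_source (fun n => (hPo n).measurableSet)
    (fun n => (hQo n).measurableSet) (fun n => D.T.injective.iterate n) hT.iterate
  have hnull := measure_sdiff_eq_zero (D.ergodic_of_measurePreserving hT) hB.isOpen.measurableSet
    (isOpen_iUnion hPo).measurableSet.nullMeasurableSet (isOpen_iUnion hQo).measurableSet hμ hAB
  set a : X → ℤ := fun x => memIndex (piece g A B) x
  set b : X → ℤ := fun y => memIndex (fun n => g n '' piece g A B n) y
  have hS (n : ℕ) : EqOn (fun x => D.iter (a x) x) (g n) (piece g A B n) := fun x hx => by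
    simp only [a, memIndex_eq (pairwise_disjoint_piece g A B) hx, D.iter_natCast, g]
  have hS' (n : ℕ) : EqOn (fun y => D.iter (-b y) y) (⇑D.T.symm)^[n] (g n '' piece g A B n) :=
    fun y hy => by simp only [b, memIndex_eq (pairwise_disjoint_image_piece g A B) hy,
      D.iter_neg_natCast]
  have he (n : ℕ) : LeftInvOn (⇑D.T.symm)^[n] (g n) (piece g A B n) :=
    ((LeftInverse.iterate D.T.symm_apply_apply n).leftInvOn _)
  have ha : ContinuousOn a (source g A B) := continuous_of_discreteTopology.comp_continuousOn
    (continuousOn_memIndex (pairwise_disjoint_piece g A B) hPo)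
  have hb : ContinuousOn b (target g A B) := continuous_of_discreteTopology.comp_continuousOn
    (continuousOn_memIndex (pairwise_disjoint_image_piece g A B) hQo)
  have hinv := invOn_iUnion_image he hS hS'
  exact ⟨_, _, _, _, a, isOpen_iUnion hPo, source_subset g A B, isOpen_iUnion hQo,
    target_subset g A B, hnull.1, hnull.2,
    hinv.bijOn (mapsTo_iUnion_image hS) (mapsTo_iUnion_image_of_leftInvOn he hS'),
    D.continuousOn_iter_apply ha, D.continuousOn_iter_apply hb.neg, hinv, ha, fun _ _ => rfl⟩

/-- **Lemma 1.4(i).** If `T` preserves `μ` and `A`, `B` are non-empty clopen sets of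
equal measure, then there is a homeomorphism `S : A' → B'` in the topological full
groupoid `[[T]]_top` between open full-measure subsets `A' ⊆ A`, `B' ⊆ B`. -/
theorem exists_full_groupoid_homeo_measure_preserving {X : Type*}
    [TopologicalSpace X] [PolishSpace X] [MeasurableSpace X] [BorelSpace X]
    (D : DynSys X) (hzd : ZeroDimensional X)
    (hmp : Measure.map (⇑D.T) D.μ = D.μ)
    (A B : Set X) (hA : IsClopen A) (hB : IsClopen B)
    (hAne : A.Nonempty) (hBne : B.Nonempty)
    (hAB : D.μ A = D.μ B) :
    ∃ (A' B' : Set X) (S S' : X → X) (a : X → ℤ),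
      IsOpen A' ∧ A' ⊆ A ∧ IsOpen B' ∧ B' ⊆ B ∧
      D.μ (A \ A') = 0 ∧ D.μ (B \ B') = 0 ∧
      Set.BijOn S A' B' ∧ ContinuousOn S A' ∧ ContinuousOn S' B' ∧
      Set.InvOn S' S A' B' ∧
      ContinuousOn a A' ∧ (∀ x ∈ A', S x = D.iter (a x) x) :=
  exists_full_groupoid_homeo_measure_preserving_general D hmp A B hA hB hAB
end
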